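/- arXiv:2412.07816 — 2 statements merged into one kernel-verified Lean document; each statement's English description precedes it below -/
import Mathlib

section
/- If (d, r) is an arithmetical structure on the wheel graph W_n and d_i = 1 for some vertex v_i, then d_u > 1 for every vertex u adjacent to v_i in W_n. -/
/-!
At a vertex `u` with `d u = 1` the defining equation reads `r u = ∑_{w ~ u} r w`, so `r u ≥ r w`
for every neighbour `w`, strictly when `u` lies on the cycle (three positive summands). Two
adjacent vertices with `d = 1`, one of them on the cycle, would each have `r` at least that of
the other, one inequality being strict.
-/

/-- Predecessor of cycle vertex `i` in the cycle `v_1, …, v_n`. -/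
def cyclePrev (n i : ℕ) : ℕ := if i = 1 then n else i - 1

/-- Successor of cycle vertex `i` in the cycle `v_1, …, v_n`. -/
def cycleNext (n i : ℕ) : ℕ := if i = n then 1 else i + 1

/-- `(d, r)` is an arithmetical structure on the wheel graph `W_n`, whose hub `v_0`
is indexed by `0` and whose cycle vertices `v_1, …, v_n` are indexed by `1, …, n`. -/
def IsWheelArithStructure (n : ℕ) (d r : ℕ → ℕ) : Prop :=
  (∀ i ≤ n, 0 < d i) ∧ (∀ i ≤ n, 0 < r i) ∧
  (Finset.range (n + 1)).gcd r = 1 ∧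
  d 0 * r 0 = ∑ i ∈ Finset.Icc 1 n, r i ∧
  ∀ i, 1 ≤ i → i ≤ n → d i * r i = r 0 + r (cyclePrev n i) + r (cycleNext n i)

lemma one_le_cyclePrev {n i : ℕ} (hi : 1 ≤ i) (hin : i ≤ n) : 1 ≤ cyclePrev n i := by
  unfold cyclePrev; split <;> omega

lemma cyclePrev_le {n i : ℕ} (hin : i ≤ n) : cyclePrev n i ≤ n := by
  unfold cyclePrev; split <;> omega

lemma one_le_cycleNext (n i : ℕ) : 1 ≤ cycleNext n i := by
  unfold cycleNext; split <;> omega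

lemma cycleNext_le {n i : ℕ} (hi : 1 ≤ i) (hin : i ≤ n) : cycleNext n i ≤ n := by
  unfold cycleNext; split <;> omega

lemma cycleNext_cyclePrev {n i : ℕ} (hi : 1 ≤ i) (hin : i ≤ n) :
    cycleNext n (cyclePrev n i) = i := by
  unfold cyclePrev cycleNext; split <;> split <;> omega

lemma cyclePrev_cycleNext {n i : ℕ} (hi : 1 ≤ i) :
    cyclePrev n (cycleNext n i) = i := by
  unfold cycleNext cyclePrev; split <;> split <;> omega

namespace IsWheelArithStructure

variable {n : ℕ} {d r : ℕ → ℕ} (h : IsWheelArithStructure n d r) {i : ℕ}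
include h

lemma one_lt_d (hin : i ≤ n) (hd : d i ≠ 1) : 1 < d i := by
  have := h.1 i hin
  omega

lemma r_pos (hin : i ≤ n) : 0 < r i := h.2.1 i hin

lemma r_le_r_zero_of_d_zero_eq_one (hd : d 0 = 1) (hi : 1 ≤ i) (hin : i ≤ n) : r i ≤ r 0 := by
  have hsum := h.2.2.2.1
  rw [hd, one_mul] at hsum
  exact hsum ▸ Finset.single_le_sum (fun _ _ => Nat.zero_le _) (Finset.mem_Icc.mpr ⟨hi, hin⟩)

lemma r_eq_of_d_eq_one (hi : 1 ≤ i) (hin : i ≤ n) (hd : d i = 1) :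
    r i = r 0 + r (cyclePrev n i) + r (cycleNext n i) := by
  simpa [hd] using h.2.2.2.2 i hi hin

lemma r_zero_lt_of_d_eq_one (hi : 1 ≤ i) (hin : i ≤ n) (hd : d i = 1) : r 0 < r i := by
  have := h.r_eq_of_d_eq_one hi hin hd
  have := h.r_pos (cyclePrev_le hin)
  omega

lemma r_cyclePrev_lt_of_d_eq_one (hi : 1 ≤ i) (hin : i ≤ n) (hd : d i = 1) :
    r (cyclePrev n i) < r i := by
  have := h.r_eq_of_d_eq_one hi hin hd
  have := h.r_pos (Nat.zero_le n)
  omega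

lemma r_cycleNext_lt_of_d_eq_one (hi : 1 ≤ i) (hin : i ≤ n) (hd : d i = 1) :
    r (cycleNext n i) < r i := by
  have := h.r_eq_of_d_eq_one hi hin hd
  have := h.r_pos (Nat.zero_le n)
  omega

end IsWheelArithStructure

theorem wheel_d_eq_one_neighbors_gt_one_general (n : ℕ) (d r : ℕ → ℕ)
    (h : IsWheelArithStructure n d r) :
    (d 0 = 1 → ∀ i, 1 ≤ i → i ≤ n → 1 < d i) ∧
    (∀ i, 1 ≤ i → i ≤ n → d i = 1 →
      1 < d 0 ∧ 1 < d (cyclePrev n i) ∧ 1 < d (cycleNext n i)) := by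
  refine ⟨fun hd0 i hi hin => h.one_lt_d hin fun hdi => ?_, fun i hi hin hdi => ⟨?_, ?_, ?_⟩⟩
  · exact (h.r_zero_lt_of_d_eq_one hi hin hdi).not_ge (h.r_le_r_zero_of_d_zero_eq_one hd0 hi hin)
  · exact h.one_lt_d (Nat.zero_le n) fun hd0 =>
      (h.r_zero_lt_of_d_eq_one hi hin hdi).not_ge (h.r_le_r_zero_of_d_zero_eq_one hd0 hi hin)
  · have hprev := h.r_cyclePrev_lt_of_d_eq_one hi hin hdi
    refine h.one_lt_d (cyclePrev_le hin) fun hdp => hprev.not_gt ?_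
    simpa only [cycleNext_cyclePrev hi hin] using
      h.r_cycleNext_lt_of_d_eq_one (one_le_cyclePrev hi hin) (cyclePrev_le hin) hdp
  · have hnext := h.r_cycleNext_lt_of_d_eq_one hi hin hdi
    refine h.one_lt_d (cycleNext_le hi hin) fun hdn => hnext.not_gt ?_
    simpa only [cyclePrev_cycleNext hi] using
      h.r_cyclePrev_lt_of_d_eq_one (one_le_cycleNext n i) (cycleNext_le hi hin) hdn

/-- If `(d, r)` is an arithmetical structure on `W_n` and `d i = 1` at some vertex,
then `d u > 1` at all vertices `u` adjacent to `v_i`. -/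
theorem wheel_d_eq_one_neighbors_gt_one (n : ℕ) (hn : 3 ≤ n) (d r : ℕ → ℕ)
    (h : IsWheelArithStructure n d r) :
    (d 0 = 1 → ∀ i, 1 ≤ i → i ≤ n → 1 < d i) ∧
    (∀ i, 1 ≤ i → i ≤ n → d i = 1 →
      1 < d 0 ∧ 1 < d (cyclePrev n i) ∧ 1 < d (cycleNext n i)) :=
  wheel_d_eq_one_neighbors_gt_one_general n d r h
end

section
/- Let (d, r) be an arithmetical structure on the cycle C_n and let p = lcm(r_1, ..., r_n). If r̃_0 is a positive integer such that p divides r̃_0 and r̃_0 divides r_1 + ... + r_n, then (r̃_0, r_1, ..., r_n) is an arithmetical r-structure on the wheel graph W_n. -/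
/-- An arithmetical `r`-structure on the wheel graph `W_n`, via the divisibility relations. -/
def IsWheelRStructure (n : ℕ) (r : ℕ → ℕ) : Prop :=
  (∀ i ≤ n, 0 < r i) ∧ (Finset.range (n + 1)).gcd r = 1 ∧
  r 0 ∣ ∑ i ∈ Finset.Icc 1 n, r i ∧
  ∀ i, 1 ≤ i → i ≤ n → r i ∣ r 0 + r (cyclePrev n i) + r (cycleNext n i)

/-- `(d, r)` is an arithmetical structure on the cycle `C_n`. -/
def IsCycleArithStructure (n : ℕ) (d r : ℕ → ℕ) : Prop :=
  (∀ i, 1 ≤ i → i ≤ n → 0 < d i) ∧ (∀ i, 1 ≤ i → i ≤ n → 0 < r i) ∧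
  (Finset.Icc 1 n).gcd r = 1 ∧
  ∀ i, 1 ≤ i → i ≤ n → d i * r i = r (cyclePrev n i) + r (cycleNext n i)

theorem cyclePrev_mem_Icc {n i : ℕ} (hi : i ∈ Finset.Icc 1 n) :
    cyclePrev n i ∈ Finset.Icc 1 n := by
  simp only [Finset.mem_Icc] at hi ⊢
  unfold cyclePrev
  split_ifs <;> omega

theorem cycleNext_mem_Icc {n i : ℕ} (hi : i ∈ Finset.Icc 1 n) :
    cycleNext n i ∈ Finset.Icc 1 n := by
  simp only [Finset.mem_Icc] at hi ⊢
  unfold cycleNext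
  split_ifs <;> omega

theorem IsCycleArithStructure.dvd_prev_add_next {n : ℕ} {d r : ℕ → ℕ}
    (h : IsCycleArithStructure n d r) {i : ℕ} (hi : i ∈ Finset.Icc 1 n) :
    r i ∣ r (cyclePrev n i) + r (cycleNext n i) := by
  rw [Finset.mem_Icc] at hi
  exact Dvd.intro_left (d i) (h.2.2.2 i hi.1 hi.2)

theorem Nat.range_succ_eq_insert_zero_Icc_one (n : ℕ) :
    Finset.range (n + 1) = insert 0 (Finset.Icc 1 n) := by
  rw [Nat.range_succ_eq_Icc_zero, ← Finset.insert_Icc_add_one_left_eq_Icc (Nat.zero_le n), zero_add]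

theorem wheel_rStructure_from_cycle_general (n : ℕ) (d r : ℕ → ℕ)
    (h : IsCycleArithStructure n d r) (r0 : ℕ) (hr0 : 0 < r0)
    (hlcm : (Finset.Icc 1 n).lcm r ∣ r0)
    (hdvd : r0 ∣ ∑ i ∈ Finset.Icc 1 n, r i) :
    IsWheelRStructure n (fun i => if i = 0 then r0 else r i) := by
  set r' : ℕ → ℕ := fun i => if i = 0 then r0 else r i
  have hr' : ∀ i ∈ Finset.Icc 1 n, r' i = r i := fun i hi =>
    if_neg (Nat.one_le_iff_ne_zero.1 (Finset.mem_Icc.1 hi).1)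
  refine ⟨fun i hi => ?_, ?_, ?_, fun i hi₁ hin => ?_⟩
  · rcases Nat.eq_zero_or_pos i with rfl | hi₀
    · exact hr0
    · rw [hr' i (Finset.mem_Icc.2 ⟨hi₀, hi⟩)]
      exact h.2.1 i hi₀ hi
  · rw [Nat.range_succ_eq_insert_zero_Icc_one, Finset.gcd_insert, Finset.gcd_congr rfl hr',
      h.2.2.1, gcd_one_right]
  · rw [Finset.sum_congr rfl hr']
    exact hdvd
  · have hi : i ∈ Finset.Icc 1 n := Finset.mem_Icc.2 ⟨hi₁, hin⟩
    rw [hr' i hi, hr' _ (cyclePrev_mem_Icc hi), hr' _ (cycleNext_mem_Icc hi), add_assoc]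
    exact dvd_add ((Finset.dvd_lcm hi).trans hlcm) (h.dvd_prev_add_next hi)

/-- If `(d, r)` is an arithmetical structure on `C_n`, `p = lcm(r 1, …, r n)` divides
`r̃ 0` and `r̃ 0` divides `r 1 + ⋯ + r n`, then `(r̃ 0, r 1, …, r n)` is an
arithmetical r-structure on `W_n`. -/
theorem wheel_rStructure_from_cycle (n : ℕ) (hn : 3 ≤ n) (d r : ℕ → ℕ)
    (h : IsCycleArithStructure n d r) (r0 : ℕ) (hr0 : 0 < r0)
    (hlcm : (Finset.Icc 1 n).lcm r ∣ r0)
    (hdvd : r0 ∣ ∑ i ∈ Finset.Icc 1 n, r i) :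
    IsWheelRStructure n (fun i => if i = 0 then r0 else r i) :=
  wheel_rStructure_from_cycle_general n d r h r0 hr0 hlcm hdvd
end
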